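/- (Theorem 1) If ‖p − p⁽⁰⁾‖² = N^{-1}[(1 − f^{-1})^{-1} ln f − 1] + ε with ε > 0, then the expected drift satisfies E{Δμ} > N(1 − f^{-1})ε. -/

import Mathlib

open Finset

/-! Since `-log (1 - x) > x` for `0 ≠ x < 1`, the drift exceeds its linearisation
`-ln f + N (1 - f⁻¹) ∑ pₖ²`, and `∑ pₖ² = ‖p - p⁽⁰⁾‖² + N⁻¹`, so the hypothesis on the distance
to the uniform vector makes this linearisation exactly `N (1 - f⁻¹) ε`. -/

lemma Real.lt_neg_log_one_sub {x : ℝ} (hx0 : x ≠ 0) (hx1 : x < 1) : x < -Real.log (1 - x) := by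
  have h := Real.log_lt_sub_one_of_pos (sub_pos.mpr hx1) (by simpa using hx0)
  linarith

lemma sum_sub_inv_card_sq {ι : Type*} [Fintype ι] {p : ι → ℝ} (hsum : ∑ i, p i = 1) :
    ∑ i, (p i - 1 / Fintype.card ι) ^ 2 = ∑ i, p i ^ 2 - 1 / Fintype.card ι := by
  set c : ℝ := 1 / Fintype.card ι
  have hcard : (Fintype.card ι : ℝ) * c ^ 2 = c := by
    rcases eq_or_ne (Fintype.card ι : ℝ) 0 with h | h
    · simp [c, h] -- empty `ι`: both sides vanish because `1 / 0 = 0`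
    · simp only [c]
      field_simp
  calc ∑ i, (p i - c) ^ 2 = ∑ i, p i ^ 2 - 2 * c * ∑ i, p i + Fintype.card ι * c ^ 2 := by
        simp only [sub_sq, sum_add_distrib, sum_sub_distrib, sum_const, card_univ, nsmul_eq_mul,
          ← sum_mul, ← mul_sum]
        ring
    _ = ∑ i, p i ^ 2 - c := by rw [hsum, hcard]; ring

lemma sum_mul_log_one_sub_mul_lt {ι : Type*} [Fintype ι] {p : ι → ℝ} (hpos : ∀ i, 0 < p i)
    (hsum : ∑ i, p i = 1) {a : ℝ} (ha0 : 0 < a) (ha1 : a < 1) :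
    ∑ i, p i * Real.log (1 - p i * a) < -a * ∑ i, p i ^ 2 := by
  have hne : (univ : Finset ι).Nonempty := nonempty_of_sum_ne_zero (by rw [hsum]; exact one_ne_zero)
  rw [mul_sum]
  refine sum_lt_sum_of_nonempty hne fun i _ => ?_
  have hp1 : p i ≤ 1 := hsum ▸ single_le_sum (fun j _ => (hpos j).le) (mem_univ i)
  have hlog := Real.lt_neg_log_one_sub (mul_pos (hpos i) ha0).ne' (by nlinarith)
  nlinarith [hpos i]

theorem theorem1_drift_general (N : ℕ) (hN : 1 ≤ N) (f : ℝ) (hf : 1 < f)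
    (p : Fin N → ℝ) (hpos : ∀ i, 0 < p i)
    (hsum : ∑ i, p i = 1) (ε : ℝ)
    (hdist : ∑ i, (p i - 1 / N) ^ 2 =
      (N : ℝ)⁻¹ * ((1 - f⁻¹)⁻¹ * Real.log f - 1) + ε) :
    ∑ k, p k * (-Real.log f - (N : ℝ) * Real.log (1 - p k * (1 - f⁻¹))) >
      (N : ℝ) * (1 - f⁻¹) * ε := by
  have hNpos : (0 : ℝ) < N := by exact_mod_cast hN
  set a := 1 - f⁻¹
  have ha0 : 0 < a := sub_pos.mpr (inv_lt_one_of_one_lt₀ hf)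
  have ha1 : a < 1 := sub_lt_self 1 (inv_pos.mpr (by linarith))
  have hsq : ∑ i, p i ^ 2 = (N : ℝ)⁻¹ * a⁻¹ * Real.log f + ε := by
    have h := sum_sub_inv_card_sq hsum
    rw [Fintype.card_fin, hdist] at h
    linear_combination -h
  have hlog := sum_mul_log_one_sub_mul_lt hpos hsum ha0 ha1
  calc ∑ k, p k * (-Real.log f - (N : ℝ) * Real.log (1 - p k * a))
      = -Real.log f - N * ∑ k, p k * Real.log (1 - p k * a) := by
        simp only [mul_sub, sum_sub_distrib, ← sum_mul, hsum, one_mul, mul_sum]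
        congr 1
        exact sum_congr rfl fun k _ => by ring
    _ > -Real.log f + N * a * ∑ k, p k ^ 2 := by
        linarith [mul_lt_mul_of_pos_left hlog hNpos]
    _ = N * a * ε := by rw [hsq]; field_simp; ring

theorem theorem1_drift (N : ℕ) (hN : 1 ≤ N) (f : ℝ) (hf : 1 < f)
    (p : Fin N → ℝ) (hpos : ∀ i, 0 < p i) (hlt : ∀ i, p i < 1)
    (hsum : ∑ i, p i = 1) (ε : ℝ) (hε : 0 < ε)
    (hdist : ∑ i, (p i - 1 / N) ^ 2 =
      (N : ℝ)⁻¹ * ((1 - f⁻¹)⁻¹ * Real.log f - 1) + ε) :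
    ∑ k, p k * (-Real.log f - (N : ℝ) * Real.log (1 - p k * (1 - f⁻¹))) >
      (N : ℝ) * (1 - f⁻¹) * ε :=
  theorem1_drift_general N hN f hf p hpos hsum ε hdist
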